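/- arXiv:2004.02287 — 2 statements merged into one kernel-verified Lean document; each statement's English description precedes it below -/
import Mathlib

section
/- For every real numbers α, β and parameters p, q ∈ [0,1] with p + q > 0, one has |sin α − sin β − (α − β)·cos β| ≤ |α − β|^(p+q+1) / (2^(p+q−1)·(p+q+1)) + q·|α − β|^(p+q)·|β| / (2^(p+q−2)·(p+q)). -/
/-!
Write the Taylor remainder as `∫₀ʰ (cos (β + s) - cos β) ds` and factor the integrand as
`-2 sin (β + s/2) sin (s/2)`. Bounding `|sin (s/2)| ≤ (s/2)^p`, `|sin (β + s/2)| ≤ (s/2 + |β|)^q`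
and linearizing the concave power `(s/2 + |β|)^q ≤ (s/2)^q + q |β| (s/2)^(q-1)` leaves an
integrand that is a sum of two powers of `s`, integrable since `p + q - 1 > -1`.
-/

open Real intervalIntegral
open MeasureTheory (volume ae_of_all)

lemma abs_sin_le_abs_rpow {r : ℝ} (hr0 : 0 ≤ r) (hr1 : r ≤ 1) (x : ℝ) : |sin x| ≤ |x| ^ r := by
  rcases le_or_gt 1 |x| with hx | hx
  · calc |sin x| ≤ 1 := abs_sin_le_one x
      _ ≤ |x| ^ r := one_le_rpow hx hr0
  · rcases eq_or_ne x 0 with rfl | hx0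
    · simp [rpow_nonneg]
    calc |sin x| ≤ |x| := abs_sin_le_abs
      _ = |x| ^ (1 : ℝ) := (rpow_one _).symm
      _ ≤ |x| ^ r := rpow_le_rpow_of_exponent_ge (abs_pos.mpr hx0) hx.le hr1

lemma add_rpow_le_rpow_add_mul_rpow_sub_one {a b q : ℝ} (ha : 0 < a) (hb : 0 ≤ b)
    (hq0 : 0 ≤ q) (hq1 : q ≤ 1) : (a + b) ^ q ≤ a ^ q + q * b * a ^ (q - 1) := by
  have hbernoulli : (1 + b / a) ^ q ≤ 1 + q * (b / a) :=
    rpow_one_add_le_one_add_mul_self (by linarith [div_nonneg hb ha.le]) hq0 hq1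
  calc (a + b) ^ q = a ^ q * (1 + b / a) ^ q := by
        rw [← mul_rpow ha.le (by positivity), mul_add, mul_one, mul_div_cancel₀ _ ha.ne']
    _ ≤ a ^ q * (1 + q * (b / a)) := mul_le_mul_of_nonneg_left hbernoulli (by positivity)
    _ = a ^ q + q * b * a ^ (q - 1) := by
        rw [rpow_sub ha, rpow_one]
        field_simp

lemma two_mul_div_two_rpow {s : ℝ} (hs : 0 ≤ s) (r : ℝ) :
    2 * (s / 2) ^ r = s ^ r / 2 ^ (r - 1) := by
  rw [div_rpow hs zero_le_two, rpow_sub_one two_ne_zero]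
  field_simp

lemma abs_cos_add_sub_cos_le {p q : ℝ} (hp0 : 0 ≤ p) (hp1 : p ≤ 1) (hq0 : 0 ≤ q) (hq1 : q ≤ 1)
    (β : ℝ) {s : ℝ} (hs : 0 < s) :
    |cos (β + s) - cos β| ≤
      s ^ (p + q) / 2 ^ (p + q - 1) + q * |β| * (s ^ (p + q - 1) / 2 ^ (p + q - 2)) := by
  set a := s / 2 with ha_def
  have ha : 0 < a := half_pos hs
  have hfactor : cos (β + s) - cos β = -2 * sin (β + a) * sin a := by
    rw [cos_sub_cos, ha_def]
    ring_nf
  have hsin_a : |sin a| ≤ a ^ p := by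
    simpa [abs_of_pos ha] using abs_sin_le_abs_rpow hp0 hp1 a
  have hsin_βa : |sin (β + a)| ≤ (a + |β|) ^ q :=
    (abs_sin_le_abs_rpow hq0 hq1 _).trans <| rpow_le_rpow (abs_nonneg _)
      ((abs_add_le β a).trans_eq (by rw [abs_of_pos ha, add_comm])) hq0
  calc |cos (β + s) - cos β| = 2 * |sin (β + a)| * |sin a| := by
        rw [hfactor, abs_mul, abs_mul]
        norm_num
    _ ≤ 2 * (a ^ q + q * |β| * a ^ (q - 1)) * a ^ p := by
        gcongr
        exact hsin_βa.trans (add_rpow_le_rpow_add_mul_rpow_sub_one ha (abs_nonneg β) hq0 hq1)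
    _ = 2 * a ^ (p + q) + q * |β| * (2 * a ^ (p + q - 1)) := by
        rw [rpow_add ha, show p + q - 1 = p + (q - 1) by ring, rpow_add ha]
        ring
    _ = _ := by
        rw [two_mul_div_two_rpow hs.le, two_mul_div_two_rpow hs.le]
        ring_nf

lemma sin_add_sub_sin_sub_mul_cos_eq_integral (β h : ℝ) :
    sin (β + h) - sin β - h * cos β = ∫ s in (0 : ℝ)..h, (cos (β + s) - cos β) := by
  rw [integral_sub ((by fun_prop : Continuous fun s ↦ cos (β + s)).intervalIntegrable _ _)
    intervalIntegrable_const, integral_comp_add_left cos, integral_cos, integral_const]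
  simp

lemma integral_rpow_div {r : ℝ} (hr : -1 < r) (h c : ℝ) :
    ∫ s in (0 : ℝ)..h, s ^ r / c = h ^ (r + 1) / (c * (r + 1)) := by
  rw [integral_div, integral_rpow (Or.inl hr), zero_rpow (by linarith), sub_zero, div_div,
    mul_comm]

theorem abs_sin_add_sub_sin_sub_mul_cos_le {p q : ℝ} (hp0 : 0 ≤ p) (hp1 : p ≤ 1) (hq0 : 0 ≤ q)
    (hq1 : q ≤ 1) (hpq : 0 < p + q) (β : ℝ) {h : ℝ} (hh : 0 ≤ h) :
    |sin (β + h) - sin β - h * cos β| ≤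
      h ^ (p + q + 1) / (2 ^ (p + q - 1) * (p + q + 1)) +
      q * h ^ (p + q) * |β| / (2 ^ (p + q - 2) * (p + q)) := by
  have hint (r : ℝ) (hr : -1 < r) (c : ℝ) : IntervalIntegrable (fun s ↦ s ^ r / c) volume 0 h :=
    (intervalIntegrable_rpow' hr).div_const c
  rw [sin_add_sub_sin_sub_mul_cos_eq_integral, ← norm_eq_abs]
  calc _ ≤ ∫ s in (0 : ℝ)..h,
        (s ^ (p + q) / 2 ^ (p + q - 1) + q * |β| * (s ^ (p + q - 1) / 2 ^ (p + q - 2))) :=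
        norm_integral_le_of_norm_le hh
          (ae_of_all _ fun s hs ↦ abs_cos_add_sub_cos_le hp0 hp1 hq0 hq1 β hs.1)
          ((hint _ (by linarith) _).add ((hint _ (by linarith) _).const_mul _))
    _ = _ := by
        rw [integral_add (hint _ (by linarith) _) ((hint _ (by linarith) _).const_mul _),
          integral_const_mul, integral_rpow_div (by linarith), integral_rpow_div (by linarith),
          sub_add_cancel]
        ring

theorem stmt_0 (α β p q : ℝ) (hp : p ∈ Set.Icc (0:ℝ) 1) (hq : q ∈ Set.Icc (0:ℝ) 1)
    (hpq : 0 < p + q) :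
    |Real.sin α - Real.sin β - (α - β) * Real.cos β| ≤
      |α - β| ^ (p + q + 1) / ((2:ℝ) ^ (p + q - 1) * (p + q + 1)) +
      q * |α - β| ^ (p + q) * |β| / ((2:ℝ) ^ (p + q - 2) * (p + q)) := by
  obtain ⟨hp0, hp1⟩ := hp
  obtain ⟨hq0, hq1⟩ := hq
  rcases le_total β α with hβα | hαβ
  · have key := abs_sin_add_sub_sin_sub_mul_cos_le hp0 hp1 hq0 hq1 hpq β (sub_nonneg.2 hβα)
    rw [abs_of_nonneg (sub_nonneg.2 hβα)]
    rwa [add_sub_cancel] at key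
  · have key := abs_sin_add_sub_sin_sub_mul_cos_le hp0 hp1 hq0 hq1 hpq (-β) (sub_nonneg.2 hαβ)
    have hodd : sin (-β + (β - α)) - sin (-β) - (β - α) * cos (-β)
        = -(sin α - sin β - (α - β) * cos β) := by
      rw [show -β + (β - α) = -α by ring, sin_neg, sin_neg, cos_neg]
      ring
    rw [abs_sub_comm α β, abs_of_nonneg (sub_nonneg.2 hαβ)]
    rwa [hodd, abs_neg, abs_neg] at key
end

section
/- Let f : ℝ → ℝ be defined (up to constants) by a derivative f' satisfying −log(1 − t + t²/2) ≤ f'(t) ≤ log(1 + t + t²/2) for all t ∈ ℝ. Then the function t ↦ sin t satisfies the same bounds: −log(1 − t + t²/2) ≤ sin t ≤ log(1 + t + t²/2) for all t ∈ ℝ. -/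
/-!
Since `sin (-t) = -sin t`, the lower bound is the upper bound at `-t`. For the upper bound,
`g t = log (1 + t + t ^ 2 / 2) - sin t` vanishes at `0` and has derivative
`(1 + t) / (1 + t + t ^ 2 / 2) - cos t`; the Taylor bounds `1 - t²/2 ≤ cos t ≤ 1 - t²/2 + t⁴/24`
show that `g` decreases on `[-2, 0]` and increases on `[0, 6/5]`. Outside `[-2, 6/5]`, either
`sin t ≤ 0 ≤ log (1 + t + t ^ 2 / 2)` (on `[-π, -2]`) or `1 + t + t ^ 2 / 2 ≥ e`, so the logarithm
is at least `1 ≥ sin t`.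
-/

open Real Set

lemma cos_le_one_sub_sq_div_two_add_pow_four_div_24 (x : ℝ) :
    cos x ≤ 1 - x ^ 2 / 2 + x ^ 4 / 24 := by
  suffices h : ∀ x, 0 ≤ x → cos x ≤ 1 - x ^ 2 / 2 + x ^ 4 / 24 by
    rcases le_total 0 x with hx | hx
    · exact h x hx
    · simpa [cos_neg, Even.neg_pow (by decide : Even 2), Even.neg_pow (by decide : Even 4)]
        using h (-x) (neg_nonneg.2 hx)
  let r : ℝ → ℝ := fun x ↦ 1 - x ^ 2 / 2 + x ^ 4 / 24 - cos x
  have hr : ∀ x, HasDerivAt r (-x + x ^ 3 / 6 + sin x) x := fun x ↦ by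
    refine ((((hasDerivAt_const x 1).sub ((hasDerivAt_pow 2 x).div_const 2)).add
      ((hasDerivAt_pow 4 x).div_const 24)).sub (hasDerivAt_cos x)).congr_deriv ?_
    norm_num
    ring
  have hr_diff : Differentiable ℝ r := fun x ↦ (hr x).differentiableAt
  have hr_mono : MonotoneOn r (Ici 0) := by
    refine monotoneOn_of_deriv_nonneg (convex_Ici 0) hr_diff.continuous.continuousOn
      hr_diff.differentiableOn fun y hy ↦ ?_
    rw [interior_Ici] at hy
    rw [(hr y).deriv]
    linarith [sin_ge_sub_cube (le_of_lt hy)]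
  intro x hx
  have := hr_mono self_mem_Ici hx hx
  norm_num [r] at this
  linarith

lemma one_add_add_sq_div_two_pos (t : ℝ) : 0 < 1 + t + t ^ 2 / 2 := by
  nlinarith [sq_nonneg (t + 1)]

lemma hasDerivAt_log_one_add_add_sq_div_two_sub_sin (t : ℝ) :
    HasDerivAt (fun t ↦ log (1 + t + t ^ 2 / 2) - sin t)
      ((1 + t) / (1 + t + t ^ 2 / 2) - cos t) t := by
  have hq : HasDerivAt (fun t : ℝ ↦ 1 + t + t ^ 2 / 2) (1 + t) t := by
    refine (((hasDerivAt_id t).const_add 1).add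
      ((hasDerivAt_pow 2 t).div_const 2)).congr_deriv ?_
    norm_num
  exact (hq.log (one_add_add_sq_div_two_pos t).ne').sub (hasDerivAt_sin t)

lemma sin_le_log_one_add_add_sq_div_two_of_nonneg_of_le {t : ℝ} (h₀ : 0 ≤ t) (h₁ : t ≤ 6 / 5) :
    sin t ≤ log (1 + t + t ^ 2 / 2) := by
  set g : ℝ → ℝ := fun t ↦ log (1 + t + t ^ 2 / 2) - sin t
  have hg : Differentiable ℝ g := fun x ↦
    (hasDerivAt_log_one_add_add_sq_div_two_sub_sin x).differentiableAt
  have hg_mono : MonotoneOn g (Icc 0 (6 / 5)) := by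
    refine monotoneOn_of_deriv_nonneg (convex_Icc _ _) hg.continuous.continuousOn
      hg.differentiableOn fun x hx ↦ ?_
    rw [interior_Icc] at hx
    obtain ⟨hx₀, hx₁⟩ := hx
    rw [(hasDerivAt_log_one_add_add_sq_div_two_sub_sin x).deriv, sub_nonneg,
      le_div_iff₀ (one_add_add_sq_div_two_pos x)]
    calc cos x * (1 + x + x ^ 2 / 2)
        ≤ (1 - x ^ 2 / 2 + x ^ 4 / 24) * (1 + x + x ^ 2 / 2) :=
          mul_le_mul_of_nonneg_right (cos_le_one_sub_sq_div_two_add_pow_four_div_24 x)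
            (one_add_add_sq_div_two_pos x).le
      _ = 1 + x - x ^ 3 * (1 / 2 + 5 * x / 24 - x ^ 2 / 24 - x ^ 3 / 48) := by ring
      _ ≤ 1 + x := by
          have : 0 ≤ 1 / 2 + 5 * x / 24 - x ^ 2 / 24 - x ^ 3 / 48 := by nlinarith
          nlinarith [pow_pos hx₀ 3]
  have := hg_mono (left_mem_Icc.2 (by norm_num)) ⟨h₀, h₁⟩ h₀
  simpa [g] using this

lemma sin_le_log_one_add_add_sq_div_two_of_le_of_nonpos {t : ℝ} (h₀ : -2 ≤ t) (h₁ : t ≤ 0) :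
    sin t ≤ log (1 + t + t ^ 2 / 2) := by
  set g : ℝ → ℝ := fun t ↦ log (1 + t + t ^ 2 / 2) - sin t
  have hg : Differentiable ℝ g := fun x ↦
    (hasDerivAt_log_one_add_add_sq_div_two_sub_sin x).differentiableAt
  have hg_anti : AntitoneOn g (Icc (-2) 0) := by
    refine antitoneOn_of_deriv_nonpos (convex_Icc _ _) hg.continuous.continuousOn
      hg.differentiableOn fun x hx ↦ ?_
    rw [interior_Icc] at hx
    obtain ⟨hx₀, hx₁⟩ := hx
    rw [(hasDerivAt_log_one_add_add_sq_div_two_sub_sin x).deriv, sub_nonpos,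
      div_le_iff₀ (one_add_add_sq_div_two_pos x)]
    calc 1 + x
        ≤ 1 + x - x ^ 3 * (1 / 2 + x / 4) := by
          nlinarith [(Odd.pow_neg_iff (by decide : Odd 3)).2 hx₁]
      _ = (1 - x ^ 2 / 2) * (1 + x + x ^ 2 / 2) := by ring
      _ ≤ cos x * (1 + x + x ^ 2 / 2) :=
          mul_le_mul_of_nonneg_right one_sub_sq_div_two_le_cos
            (one_add_add_sq_div_two_pos x).le
  have := hg_anti ⟨h₀, h₁⟩ (right_mem_Icc.2 (by norm_num)) h₁
  simpa [g] using this

lemma sin_le_log_of_exp_one_le (t : ℝ) {x : ℝ} (hx : exp 1 ≤ x) : sin t ≤ log x := by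
  have : 1 ≤ log x := (le_log_iff_exp_le (exp_pos 1 |>.trans_le hx)).2 hx
  linarith [sin_le_one t]

lemma sin_le_log_one_add_add_sq_div_two (t : ℝ) : sin t ≤ log (1 + t + t ^ 2 / 2) := by
  have he := exp_one_lt_d9
  rcases le_total t 0 with ht₀ | ht₀
  · rcases le_total (-2) t with ht₂ | ht₂
    · exact sin_le_log_one_add_add_sq_div_two_of_le_of_nonpos ht₂ ht₀
    rcases le_total (-π) t with htπ | htπ
    · exact (sin_nonpos_of_nonpos_of_neg_pi_le ht₀ htπ).trans (log_nonneg (by nlinarith))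
    · exact sin_le_log_of_exp_one_le t (by nlinarith [pi_gt_d2])
  · rcases le_total t (6 / 5) with ht | ht
    · exact sin_le_log_one_add_add_sq_div_two_of_nonneg_of_le ht₀ ht
    · exact sin_le_log_of_exp_one_le t (by nlinarith)

theorem stmt_16 (t : ℝ) :
    -Real.log (1 - t + t ^ 2 / 2) ≤ Real.sin t ∧
    Real.sin t ≤ Real.log (1 + t + t ^ 2 / 2) := by
  refine ⟨?_, sin_le_log_one_add_add_sq_div_two t⟩
  have h := sin_le_log_one_add_add_sq_div_two (-t)
  rw [sin_neg, neg_sq, ← sub_eq_add_neg] at h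
  linarith
end
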